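/- In the depth-2 Jones tower setup, define ε : B → k by ε(b) := λ⁻¹ F(b e₂). Then: (a) λ⁻² F(e₂ e₁ b) = λ⁻¹ F(b e₂) for all b ∈ B (i.e., ε(b) = ⟨1, b⟩ for the pairing ⟨a,b⟩ = λ⁻²F(a e₂ e₁ b)); (b) ε(1) = 1; and (c) ε is multiplicative: ε(bb') = ε(b)ε(b') for all b, b' ∈ B. Thus ε is a k-algebra homomorphism B → k (the counit of B). -/

import Mathlib

/-- The depth-2 Jones tower setup: a tower `N ⊆ M ⊆ M₁ ⊆ R` (with `R` playing the
role of `M₂`) of unital `k`-algebras, with conditional expectations, Jones idempotents,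
braid-like relations and depth-2 orthogonal dual bases, as in the paper. -/
structure JonesTower (k : Type*) [Field k] (R : Type*) [Ring R] [Algebra k R] where
  N : Subalgebra k R
  M : Subalgebra k R
  M₁ : Subalgebra k R
  hNM : N ≤ M
  hMM₁ : M ≤ M₁
  lam : k
  hlam : lam ≠ 0
  E : R →ₗ[k] R
  EM : R →ₗ[k] R
  EM1 : R →ₗ[k] R
  hE_mem : ∀ m ∈ M, E m ∈ N
  hEM_mem : ∀ x ∈ M₁, EM x ∈ M
  hEM1_mem : ∀ x : R, EM1 x ∈ M₁
  hE_one : E 1 = 1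
  hEM_one : EM 1 = 1
  hEM1_one : EM1 1 = 1
  hE_bimod : ∀ n ∈ N, ∀ n' ∈ N, ∀ m ∈ M, E (n * m * n') = n * E m * n'
  hEM_bimod : ∀ m ∈ M, ∀ m' ∈ M, ∀ x ∈ M₁, EM (m * x * m') = m * EM x * m'
  hEM1_bimod : ∀ w ∈ M₁, ∀ w' ∈ M₁, ∀ x : R, EM1 (w * x * w') = w * EM1 x * w'
  n₀ : ℕ
  xb : Fin n₀ → R
  yb : Fin n₀ → R
  hxb : ∀ i, xb i ∈ M
  hyb : ∀ i, yb i ∈ M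
  hE_dual₁ : ∀ m ∈ M, ∑ i, E (m * xb i) * yb i = m
  hE_dual₂ : ∀ m ∈ M, ∑ i, xb i * E (yb i * m) = m
  hE_index : ∑ i, xb i * yb i = lam⁻¹ • (1 : R)
  hCMN : ∀ c ∈ M, (∀ n ∈ N, c * n = n * c) → ∃ μ : k, c = μ • (1 : R)
  hCM₁M : ∀ c ∈ M₁, (∀ m ∈ M, c * m = m * c) → ∃ μ : k, c = μ • (1 : R)
  hCM₂M₁ : ∀ c : R, (∀ w ∈ M₁, c * w = w * c) → ∃ μ : k, c = μ • (1 : R)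
  e₁ : R
  e₂ : R
  he₁ : e₁ ∈ M₁
  he₁N : ∀ n ∈ N, e₁ * n = n * e₁
  he₂M : ∀ m ∈ M, e₂ * m = m * e₂
  he₁me₁ : ∀ m ∈ M, e₁ * m * e₁ = E m * e₁
  he₂we₂ : ∀ w ∈ M₁, e₂ * w * e₂ = EM w * e₂
  hEMe₁ : EM e₁ = lam • (1 : R)
  hEM1e₂ : EM1 e₂ = lam • (1 : R)
  hspanM₁ : Subalgebra.toSubmodule M₁ =
    Submodule.span k {x : R | ∃ m ∈ M, ∃ m' ∈ M, x = m * e₁ * m'}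
  hspanM₂ : (⊤ : Submodule k R) =
    Submodule.span k {x : R | ∃ w ∈ M₁, ∃ w' ∈ M₁, x = w * e₂ * w'}
  hbraid₁ : e₁ * e₂ * e₁ = lam • e₁
  hbraid₂ : e₂ * e₁ * e₂ = lam • e₂
  r : ℕ
  zb : Fin r → R
  wb : Fin r → R
  hzbM₁ : ∀ i, zb i ∈ M₁
  hwbM₁ : ∀ i, wb i ∈ M₁
  hzbN : ∀ i, ∀ n ∈ N, zb i * n = n * zb i
  hwbN : ∀ i, ∀ n ∈ N, wb i * n = n * wb i
  hzw_orth : ∀ i j, EM (wb i * zb j) = if i = j then (1 : R) else 0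
  hzw_dual₁ : ∀ x ∈ M₁, ∑ i, EM (x * zb i) * wb i = x
  hzw_dual₂ : ∀ x ∈ M₁, ∑ i, zb i * EM (wb i * x) = x
  hzw_index : ∑ i, zb i * wb i = lam⁻¹ • (1 : R)
  s : ℕ
  ub : Fin s → R
  vb : Fin s → R
  hubM : ∀ i, ∀ m ∈ M, ub i * m = m * ub i
  hvbM : ∀ i, ∀ m ∈ M, vb i * m = m * vb i
  huv_orth : ∀ i j, EM1 (vb i * ub j) = if i = j then (1 : R) else 0
  huv_dual₁ : ∀ x : R, ∑ i, EM1 (x * ub i) * vb i = x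
  huv_dual₂ : ∀ x : R, ∑ i, ub i * EM1 (vb i * x) = x
  huv_index : ∑ i, ub i * vb i = lam⁻¹ • (1 : R)
  F : R →ₗ[k] k
  hF : ∀ c : R, (∀ n ∈ N, c * n = n * c) → algebraMap k R (F c) = EM (EM1 c)

variable {k : Type*} [Field k] {R : Type*} [Ring R] [Algebra k R]

/-- The second centralizer `A = C_{M₁}(N)`. -/
def JonesTower.A (T : JonesTower k R) : Subalgebra k R :=
  T.M₁ ⊓ Subalgebra.centralizer k (T.N : Set R)

/-- The second centralizer `B = C_{M₂}(M)`. -/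
def JonesTower.B (T : JonesTower k R) : Subalgebra k R :=
  Subalgebra.centralizer k (T.M : Set R)

/-- The big centralizer `C = C_{M₂}(N)`. -/
def JonesTower.C (T : JonesTower k R) : Subalgebra k R :=
  Subalgebra.centralizer k (T.N : Set R)

/-!
Since `M₂` is spanned by the elements `w e₂ w'` with `w, w' ∈ M₁`, two linear maps on `M₂` agree
once they agree on these, which yields the pull-down identity `x e₂ = λ⁻¹ E_{M₁}(x e₂) e₂` and the
symmetry `E_M E_{M₁}(e₂ x) = E_M E_{M₁}(x e₂)`. For `b ∈ B` the element `E_{M₁}(b e₂)` lies in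
`C_{M₁}(M) = k`, so it equals `F(b e₂)`, and the pull-down identity becomes `b e₂ = ε(b) e₂`.
Multiplicativity of `ε` follows from `b b' e₂ = ε(b') b e₂`, and the pairing formula from
`E_M E_{M₁}(e₂ e₁ b) = E_M(e₁ E_{M₁}(b e₂)) = λ F(b e₂)`.
-/

namespace JonesTower

variable (T : JonesTower k R)

lemma EM_mul_left {m x : R} (hm : m ∈ T.M) (hx : x ∈ T.M₁) : T.EM (m * x) = m * T.EM x := by
  simpa using T.hEM_bimod m hm 1 (one_mem _) x hx

lemma EM_mul_right {x m : R} (hx : x ∈ T.M₁) (hm : m ∈ T.M) : T.EM (x * m) = T.EM x * m := by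
  simpa using T.hEM_bimod 1 (one_mem _) m hm x hx

lemma EM1_mul_left {w : R} (hw : w ∈ T.M₁) (x : R) : T.EM1 (w * x) = w * T.EM1 x := by
  simpa using T.hEM1_bimod w hw 1 (one_mem _) x

lemma EM1_mul_right (x : R) {w : R} (hw : w ∈ T.M₁) : T.EM1 (x * w) = T.EM1 x * w := by
  simpa using T.hEM1_bimod 1 (one_mem _) w hw x

lemma EM1_mul_e₂ {w : R} (hw : w ∈ T.M₁) : T.EM1 (w * T.e₂) = T.lam • w := by
  rw [T.EM1_mul_left hw, T.hEM1e₂, mul_smul_comm, mul_one]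

lemma e₂_mul_mul_e₂_mul {w : R} (hw : w ∈ T.M₁) (w' : R) :
    T.e₂ * (w * T.e₂ * w') = T.EM w * T.e₂ * w' := by
  rw [← mul_assoc, ← mul_assoc, T.he₂we₂ w hw]

lemma mul_e₂_mul_mul_e₂ (w : R) {w' : R} (hw' : w' ∈ T.M₁) :
    w * T.e₂ * w' * T.e₂ = w * T.EM w' * T.e₂ := by
  rw [mul_assoc w, mul_assoc w, T.he₂we₂ w' hw', ← mul_assoc]

lemma linearMap_ext_e₂ {f g : R →ₗ[k] R}
    (h : ∀ w ∈ T.M₁, ∀ w' ∈ T.M₁, f (w * T.e₂ * w') = g (w * T.e₂ * w')) : f = g :=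
  LinearMap.ext_on T.hspanM₂.symm <| by
    rintro _ ⟨w, hw, w', hw', rfl⟩
    exact h w hw w' hw'

lemma mul_e₂_eq_smul_EM1 (x : R) : x * T.e₂ = T.lam⁻¹ • (T.EM1 (x * T.e₂) * T.e₂) := by
  have hext := T.linearMap_ext_e₂ (f := LinearMap.mulRight k T.e₂)
    (g := T.lam⁻¹ • (LinearMap.mulRight k T.e₂ ∘ₗ T.EM1 ∘ₗ LinearMap.mulRight k T.e₂))
    fun w hw w' hw' => by
      have hw'' : w * T.EM w' ∈ T.M₁ := mul_mem hw (T.hMM₁ (T.hEM_mem w' hw'))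
      simp only [LinearMap.smul_apply, LinearMap.comp_apply, LinearMap.mulRight_apply]
      rw [T.mul_e₂_mul_mul_e₂ w hw', T.EM1_mul_e₂ hw'', smul_mul_assoc, smul_smul,
        inv_mul_cancel₀ T.hlam, one_smul]
  exact LinearMap.congr_fun hext x

lemma EM_EM1_e₂_mul_comm (x : R) : T.EM (T.EM1 (T.e₂ * x)) = T.EM (T.EM1 (x * T.e₂)) := by
  have hext := T.linearMap_ext_e₂ (f := T.EM ∘ₗ T.EM1 ∘ₗ LinearMap.mulLeft k T.e₂)
    (g := T.EM ∘ₗ T.EM1 ∘ₗ LinearMap.mulRight k T.e₂) fun w hw w' hw' => by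
      have hEMw := T.hEM_mem w hw
      have hEMw' := T.hEM_mem w' hw'
      simp only [LinearMap.comp_apply, LinearMap.mulLeft_apply, LinearMap.mulRight_apply]
      rw [T.e₂_mul_mul_e₂_mul hw, T.EM1_mul_right _ hw', T.EM1_mul_e₂ (T.hMM₁ hEMw),
        smul_mul_assoc, map_smul, T.EM_mul_left hEMw hw', T.mul_e₂_mul_mul_e₂ w hw',
        T.EM1_mul_e₂ (mul_mem hw (T.hMM₁ hEMw')), map_smul, T.EM_mul_right hw hEMw']
  exact LinearMap.congr_fun hext x

lemma e₂_mem_B : T.e₂ ∈ T.B :=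
  (Subalgebra.mem_centralizer_iff k).mpr fun m hm => (T.he₂M m hm).symm

lemma e₁_mem_C : T.e₁ ∈ T.C :=
  (Subalgebra.mem_centralizer_iff k).mpr fun n hn => (T.he₁N n hn).symm

lemma B_le_C : T.B ≤ T.C :=
  Subalgebra.centralizer_le k _ _ T.hNM

lemma EM1_mem_B {x : R} (hx : x ∈ T.B) : T.EM1 x ∈ T.B :=
  (Subalgebra.mem_centralizer_iff k).mpr fun m hm => by
    rw [← T.EM1_mul_left (T.hMM₁ hm), ← T.EM1_mul_right _ (T.hMM₁ hm),
      (Subalgebra.mem_centralizer_iff k).mp hx m hm]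

lemma F_eq_of_EM_EM1_eq [Nontrivial R] {c : R} (hc : c ∈ T.C) {μ : k}
    (h : T.EM (T.EM1 c) = μ • 1) : T.F c = μ :=
  (algebraMap k R).injective <| by
    rw [T.hF c fun n hn => ((Subalgebra.mem_centralizer_iff k).mp hc n hn).symm, h,
      Algebra.algebraMap_eq_smul_one]

lemma EM1_mul_e₂_eq_F_smul [Nontrivial R] {b : R} (hb : b ∈ T.B) :
    T.EM1 (b * T.e₂) = T.F (b * T.e₂) • 1 := by
  have hbe₂ : b * T.e₂ ∈ T.B := mul_mem hb T.e₂_mem_B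
  obtain ⟨μ, hμ⟩ := T.hCM₁M _ (T.hEM1_mem _) fun m hm =>
    ((Subalgebra.mem_centralizer_iff k).mp (T.EM1_mem_B hbe₂) m hm).symm
  rw [hμ, T.F_eq_of_EM_EM1_eq (T.B_le_C hbe₂) (by rw [hμ, map_smul, T.hEM_one])]

lemma F_e₂ [Nontrivial R] : T.F T.e₂ = T.lam :=
  T.F_eq_of_EM_EM1_eq (T.B_le_C T.e₂_mem_B) (by rw [T.hEM1e₂, map_smul, T.hEM_one])

lemma F_e₂_mul_e₁_mul [Nontrivial R] {b : R} (hb : b ∈ T.B) :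
    T.F (T.e₂ * T.e₁ * b) = T.lam * T.F (b * T.e₂) :=
  T.F_eq_of_EM_EM1_eq (mul_mem (mul_mem (T.B_le_C T.e₂_mem_B) T.e₁_mem_C) (T.B_le_C hb)) <| by
    rw [mul_assoc, T.EM_EM1_e₂_mul_comm, mul_assoc, T.EM1_mul_left T.he₁,
      T.EM1_mul_e₂_eq_F_smul hb, mul_smul_comm, mul_one, map_smul, T.hEMe₁, smul_smul, mul_comm]

def counit (b : R) : k := T.lam⁻¹ * T.F (b * T.e₂)

lemma counit_one [Nontrivial R] : T.counit 1 = 1 := by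
  rw [counit, one_mul, T.F_e₂, inv_mul_cancel₀ T.hlam]

lemma mul_e₂_eq_counit_smul [Nontrivial R] {b : R} (hb : b ∈ T.B) :
    b * T.e₂ = T.counit b • T.e₂ := by
  rw [T.mul_e₂_eq_smul_EM1, T.EM1_mul_e₂_eq_F_smul hb, smul_mul_assoc, one_mul, smul_smul, counit]

lemma counit_mul [Nontrivial R] (b : R) {b' : R} (hb' : b' ∈ T.B) :
    T.counit (b * b') = T.counit b * T.counit b' := by
  rw [counit, mul_assoc, T.mul_e₂_eq_counit_smul hb', mul_smul_comm, map_smul, smul_eq_mul]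
  simp only [counit]
  ring

lemma counit_eq_pairing_one [Nontrivial R] {b : R} (hb : b ∈ T.B) :
    T.lam⁻¹ ^ 2 * T.F (T.e₂ * T.e₁ * b) = T.counit b := by
  rw [T.F_e₂_mul_e₁_mul hb, counit]
  field_simp [T.hlam]

end JonesTower

/-- Properties of the counit `ε(b) := λ⁻¹ F(b e₂)` of `B`:
(a) `ε(b) = ⟨1, b⟩ = λ⁻² F(e₂ e₁ b)`; (b) `ε(1) = 1`; (c) `ε` is multiplicative.
Hence `ε` is a `k`-algebra homomorphism `B → k`. -/
theorem counit_of_B (T : JonesTower k R) [Nontrivial R] :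
    (∀ b ∈ T.B, T.lam⁻¹ ^ 2 * T.F (T.e₂ * T.e₁ * b) = T.lam⁻¹ * T.F (b * T.e₂)) ∧
    T.lam⁻¹ * T.F ((1 : R) * T.e₂) = 1 ∧
    (∀ b ∈ T.B, ∀ b' ∈ T.B,
      T.lam⁻¹ * T.F (b * b' * T.e₂) =
        (T.lam⁻¹ * T.F (b * T.e₂)) * (T.lam⁻¹ * T.F (b' * T.e₂))) :=
  ⟨fun _ hb => T.counit_eq_pairing_one hb, T.counit_one, fun b _ _ hb' => T.counit_mul b hb'⟩
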